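/- arXiv:2201.08113 — 5 statements merged into one kernel-verified Lean document; each statement's English description precedes it below -/
import Mathlib

section
/- The ℤ-bilinear form F on X^∨ × X^∨ defined by F(u,v) := u(φ(v)) is symmetric and positive definite; that is, u(φ(v)) = v(φ(u)) for all u, v ∈ X^∨, u(φ(u)) ≥ 0 for all u ∈ X^∨, and u(φ(u)) = 0 if and only if u = 0. -/
open scoped BigOperators Pointwise

namespace NFC

/-- The coordinatewise embedding of the lattice `X = ℤ^g` into `X_ℝ = ℝ^g`. -/
def iota {g : ℕ} (x : Fin g → ℤ) : Fin g → ℝ := fun i => (x i : ℝ)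

/-- The ℝ-linear extension of an integral linear functional `u ∈ X^∨` to `X_ℝ`. -/
noncomputable def extd {g : ℕ} (u : (Fin g → ℤ) →ₗ[ℤ] ℤ) (x : Fin g → ℝ) : ℝ :=
  ∑ i, (u (Pi.single i 1) : ℝ) * x i

/-- `E_ℓ(u) = ℓ · u(φ(u))`. -/
def El {g : ℕ} {Y : Submodule ℤ (Fin g → ℤ)}
    (φ : ((Fin g → ℤ) →ₗ[ℤ] ℤ) → Y) (ℓ : ℕ) (u : (Fin g → ℤ) →ₗ[ℤ] ℤ) : ℤ :=
  (ℓ : ℤ) * u (φ u : Fin g → ℤ)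

/-- `Σ_ℓ = {α ∈ X : E_ℓ(u) + u(α) ≥ 0 for all u ∈ X^∨}`. -/
def SigmaL {g : ℕ} {Y : Submodule ℤ (Fin g → ℤ)}
    (φ : ((Fin g → ℤ) →ₗ[ℤ] ℤ) → Y) (ℓ : ℕ) : Set (Fin g → ℤ) :=
  {α | ∀ u : (Fin g → ℤ) →ₗ[ℤ] ℤ, 0 ≤ El φ ℓ u + u α}

/-- The Voronoi polytope `Σ_ℓ(c)`, defined w.r.t. the norm `‖z‖ = √(B̄(z,z))`. -/
noncomputable def VorP {g : ℕ} {Y : Submodule ℤ (Fin g → ℤ)}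
    (Bb : (Fin g → ℝ) →ₗ[ℝ] (Fin g → ℝ) →ₗ[ℝ] ℝ)
    (φ : ((Fin g → ℤ) →ₗ[ℤ] ℤ) → Y) (ℓ : ℕ)
    (c : (Fin g → ℤ) →ₗ[ℤ] ℤ) : Set (Fin g → ℝ) :=
  {x | ∀ u : (Fin g → ℤ) →ₗ[ℤ] ℤ,
    Real.sqrt (Bb (x - iota ((2 * (ℓ : ℤ)) • ((φ c : Fin g → ℤ))))
               (x - iota ((2 * (ℓ : ℤ)) • ((φ c : Fin g → ℤ))))) ≤
    Real.sqrt (Bb (x - iota ((2 * (ℓ : ℤ)) • ((φ u : Fin g → ℤ))))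
               (x - iota ((2 * (ℓ : ℤ)) • ((φ u : Fin g → ℤ)))))}

/-- A subset `Δ ⊆ X_ℝ` is integral: a bounded convex polytope equal to the convex hull
of `Δ ∩ X`, symmetric about `0`, containing `0`, with `Δ ∩ X` containing a ℤ-basis. -/
def IsIntegral {g : ℕ} (Δ : Set (Fin g → ℝ)) : Prop :=
  Bornology.IsBounded Δ ∧
  Δ = convexHull ℝ (Δ ∩ Set.range (iota (g := g))) ∧
  Δ = -Δ ∧ (0 : Fin g → ℝ) ∈ Δ ∧
  ∃ b : Module.Basis (Fin g) ℤ (Fin g → ℤ), ∀ i, iota (b i) ∈ Δ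

/-- `Σ_ℓ^α = (α + 2ℓφ(X^∨)) ∩ Σ_ℓ`. -/
def SigmaAlpha {g : ℕ} {Y : Submodule ℤ (Fin g → ℤ)}
    (φ : ((Fin g → ℤ) →ₗ[ℤ] ℤ) → Y) (ℓ : ℕ) (α : Fin g → ℤ) : Set (Fin g → ℤ) :=
  {β | β ∈ SigmaL φ ℓ ∧ ∃ u : (Fin g → ℤ) →ₗ[ℤ] ℤ, β = α + (2 * (ℓ : ℤ)) • ((φ u : Fin g → ℤ))}

/-- The convex cone generated by a set `S` (the set of all nonnegative combinations). -/
def conicHull {M : Type*} [AddCommMonoid M] [Module ℝ M] (S : Set M) : Set M :=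
  {y | ∃ (n : ℕ) (c : Fin n → ℝ) (v : Fin n → M),
    (∀ i, 0 ≤ c i) ∧ (∀ i, v i ∈ S) ∧ y = ∑ i, c i • v i}

/-- `Cone(C_ℓ^β)`: the convex cone in `X_ℝ` generated by `{γ − β : γ ∈ Σ_ℓ}`. -/
def coneC {g : ℕ} {Y : Submodule ℤ (Fin g → ℤ)}
    (φ : ((Fin g → ℤ) →ₗ[ℤ] ℤ) → Y) (ℓ : ℕ) (β : Fin g → ℤ) : Set (Fin g → ℝ) :=
  conicHull {w | ∃ γ ∈ SigmaL φ ℓ, w = iota (γ - β)}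

section Adjugate

/- `φ` is `N • B⁻¹`, like an adjugate of `B`; everything follows from
`N * u (φ v) = B (φ u) (φ v)`. -/
variable {R M : Type*} [CommRing R] [AddCommGroup M] [Module R M] {Y : Submodule R M}
  {B : Y →ₗ[R] M →ₗ[R] R} {N : R} {φ : (M →ₗ[R] R) → Y}

theorem mul_apply_eq_adjugate_apply (hφ : ∀ u, B (φ u) = N • u)
    (u : M →ₗ[R] R) (x : M) : N * u x = B (φ u) x := by
  rw [hφ]
  rfl

theorem eq_zero_of_adjugate_eq_zero [NoZeroDivisors R] (hN : N ≠ 0)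
    (hφ : ∀ u, B (φ u) = N • u) {u : M →ₗ[R] R} (hu : φ u = 0) : u = 0 := by
  ext x
  have hx := mul_apply_eq_adjugate_apply hφ u x
  rw [hu, map_zero, LinearMap.zero_apply] at hx
  exact (mul_eq_zero.mp hx).resolve_left hN

theorem apply_adjugate_comm [NoZeroDivisors R] (hN : N ≠ 0)
    (hBsymm : ∀ y z : Y, B y (z : M) = B z (y : M)) (hφ : ∀ u, B (φ u) = N • u)
    (u v : M →ₗ[R] R) : u (φ v : M) = v (φ u : M) := by
  refine mul_left_cancel₀ hN ?_
  rw [mul_apply_eq_adjugate_apply hφ, mul_apply_eq_adjugate_apply hφ, hBsymm]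

variable [LinearOrder R] [IsStrictOrderedRing R] (hN : 0 < N)
  (hBpos : ∀ y : Y, y ≠ 0 → 0 < B y (y : M)) (hφ : ∀ u, B (φ u) = N • u)
include hN hBpos hφ

theorem apply_adjugate_self_pos {u : M →ₗ[R] R} (hu : u ≠ 0) : 0 < u (φ u : M) := by
  have hφu : φ u ≠ 0 := fun h => hu (eq_zero_of_adjugate_eq_zero hN.ne' hφ h)
  have hprod : 0 < N * u (φ u : M) := by
    rw [mul_apply_eq_adjugate_apply hφ]
    exact hBpos _ hφu
  exact pos_of_mul_pos_right hprod hN.le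

theorem apply_adjugate_self_nonneg (u : M →ₗ[R] R) : 0 ≤ u (φ u : M) := by
  rcases eq_or_ne u 0 with rfl | hu
  · simp
  · exact (apply_adjugate_self_pos hN hBpos hφ hu).le

theorem apply_adjugate_self_eq_zero_iff (u : M →ₗ[R] R) : u (φ u : M) = 0 ↔ u = 0 := by
  refine ⟨fun h => ?_, fun h => by simp [h]⟩
  by_contra hu
  exact (apply_adjugate_self_pos hN hBpos hφ hu).ne' h

end Adjugate

theorem statement0_general
    (g : ℕ)
    (Y : Submodule ℤ (Fin g → ℤ))
    (B : Y →ₗ[ℤ] (Fin g → ℤ) →ₗ[ℤ] ℤ)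
    (hBsymm : ∀ y z : Y, B y (z : Fin g → ℤ) = B z (y : Fin g → ℤ))
    (hBpos : ∀ y : Y, y ≠ 0 → 0 < B y (y : Fin g → ℤ))
    (N : ℕ) (hNpos : 0 < N)
    (φ : ((Fin g → ℤ) →ₗ[ℤ] ℤ) → Y)
    (hφ : ∀ u : (Fin g → ℤ) →ₗ[ℤ] ℤ, B (φ u) = (N : ℤ) • u) :
    (∀ u v : (Fin g → ℤ) →ₗ[ℤ] ℤ, u (φ v : Fin g → ℤ) = v (φ u : Fin g → ℤ)) ∧
    (∀ u : (Fin g → ℤ) →ₗ[ℤ] ℤ, 0 ≤ u (φ u : Fin g → ℤ)) ∧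
    (∀ u : (Fin g → ℤ) →ₗ[ℤ] ℤ, u (φ u : Fin g → ℤ) = 0 ↔ u = 0) := by
  have hN : (0 : ℤ) < N := by exact_mod_cast hNpos
  exact ⟨apply_adjugate_comm hN.ne' hBsymm hφ, apply_adjugate_self_nonneg hN hBpos hφ,
    apply_adjugate_self_eq_zero_iff hN hBpos hφ⟩

/-- the bilinear form `F(u,v) = u(φ(v))` on `X^∨ × X^∨` is symmetric and
positive definite. -/
theorem statement0
    (g : ℕ) (hg : 1 ≤ g)
    (Y : Submodule ℤ (Fin g → ℤ))
    (hYfin : Y.toAddSubgroup.index ≠ 0)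
    (B : Y →ₗ[ℤ] (Fin g → ℤ) →ₗ[ℤ] ℤ)
    (hBsymm : ∀ y z : Y, B y (z : Fin g → ℤ) = B z (y : Fin g → ℤ))
    (hBpos : ∀ y : Y, y ≠ 0 → 0 < B y (y : Fin g → ℤ))
    (N : ℕ) (hN : N = (LinearMap.range B).toAddSubgroup.index) (hNpos : 0 < N)
    (φ : ((Fin g → ℤ) →ₗ[ℤ] ℤ) → Y)
    (hφ : ∀ u : (Fin g → ℤ) →ₗ[ℤ] ℤ, B (φ u) = (N : ℤ) • u) :
    (∀ u v : (Fin g → ℤ) →ₗ[ℤ] ℤ, u (φ v : Fin g → ℤ) = v (φ u : Fin g → ℤ)) ∧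
    (∀ u : (Fin g → ℤ) →ₗ[ℤ] ℤ, 0 ≤ u (φ u : Fin g → ℤ)) ∧
    (∀ u : (Fin g → ℤ) →ₗ[ℤ] ℤ, u (φ u : Fin g → ℤ) = 0 ↔ u = 0) :=
  statement0_general g Y B hBsymm hBpos N hNpos φ hφ

end NFC
end

section
/- Σ_ℓ is a finite subset of X, and Σ_ℓ + 2ℓφ(X^∨) = X; that is, every x ∈ X can be written as x = γ + 2ℓφ(u) with γ ∈ Σ_ℓ and u ∈ X^∨. -/
open scoped BigOperators Pointwise

namespace NFC

/-!
Testing `α ∈ Σ_ℓ` against `±` the coordinate functionals bounds every coordinate of `α`.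
For the covering, fix `x ∈ X`. Since `β ∘ φ = N` and `β` is injective, `φ` is linear, and the
symmetry of `B` gives `u(φ v) = v(φ u)`; hence `E_ℓ` is an integral quadratic form and
`E_ℓ(u₀ - u) - (u₀ - u)(x) - (E_ℓ(u₀) - u₀(x)) = E_ℓ(u) + u(x - 2ℓφ(u₀))`.
So `x - 2ℓφ(u₀) ∈ Σ_ℓ` for any minimiser `u₀` of the integer-valued function `u ↦ E_ℓ(u) - u(x)`,
which exists because this function is bounded below: with `m = [X : Y]` and `z = m x ∈ Y`,
`0 ≤ B(2mℓφ(u) - z, 2mℓφ(u) - z)` gives `4m²ℓN (E_ℓ(u) - u(x)) ≥ -B(z, z)`.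
-/

section

variable {X : Type*} [AddCommGroup X] {Y : Submodule ℤ X} {B : Y →ₗ[ℤ] X →ₗ[ℤ] ℤ}

lemma apply_self_nonneg (hBpos : ∀ y : Y, y ≠ 0 → 0 < B y (y : X)) (y : Y) :
    0 ≤ B y (y : X) := by
  rcases eq_or_ne y 0 with rfl | hy
  · simp
  · exact (hBpos y hy).le

lemma injective_of_apply_self_pos (hBpos : ∀ y : Y, y ≠ 0 → 0 < B y (y : X)) :
    Function.Injective B := by
  refine (injective_iff_map_eq_zero B).2 fun y hy => ?_
  by_contra hy0
  simpa [hy] using hBpos y hy0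

lemma two_mul_mul_apply_le (hBsymm : ∀ y z : Y, B y (z : X) = B z (y : X))
    (hBpos : ∀ y : Y, y ≠ 0 → 0 < B y (y : X)) (a : ℤ) (y z : Y) :
    2 * a * B y (z : X) ≤ a ^ 2 * B y (y : X) + B z (z : X) := by
  have h := apply_self_nonneg hBpos (a • y - z)
  simp only [map_sub, map_smul, Submodule.coe_sub, Submodule.coe_smul, LinearMap.sub_apply,
    LinearMap.smul_apply, smul_eq_mul, hBsymm z y] at h
  linarith

variable {N : ℕ} {φ : Module.Dual ℤ X → Y}

lemma map_sub_of_apply_eq_smul (hB : Function.Injective B)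
    (hφ : ∀ u, B (φ u) = (N : ℤ) • u) (u v : Module.Dual ℤ X) : φ (u - v) = φ u - φ v :=
  hB (by rw [map_sub, hφ, hφ, hφ, smul_sub])

lemma apply_comm_of_apply_eq_smul (hBsymm : ∀ y z : Y, B y (z : X) = B z (y : X))
    (hN : 0 < N) (hφ : ∀ u, B (φ u) = (N : ℤ) • u) (u v : Module.Dual ℤ X) :
    u (φ v : X) = v (φ u : X) := by
  have h := hBsymm (φ u) (φ v)
  simp only [hφ, LinearMap.smul_apply, smul_eq_mul] at h
  exact mul_left_cancel₀ (by positivity) h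

end

lemma exists_forall_le_of_bddBelow_range {α : Type*} [Nonempty α] {f : α → ℤ}
    (hf : BddBelow (Set.range f)) : ∃ a, ∀ b, f a ≤ f b := by
  obtain ⟨a, ha⟩ := Int.csInf_mem (Set.range_nonempty f) hf
  exact ⟨a, fun b => ha ▸ csInf_le hf ⟨b, rfl⟩⟩

section

variable {g : ℕ} {Y : Submodule ℤ (Fin g → ℤ)} {φ : Module.Dual ℤ (Fin g → ℤ) → Y} {ℓ : ℕ}

theorem finite_SigmaL : (SigmaL φ ℓ).Finite := by
  refine (Set.finite_Icc (fun i => -El φ ℓ (LinearMap.proj i))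
    (fun i => El φ ℓ (-LinearMap.proj i))).subset fun α hα => ⟨fun i => ?_, fun i => ?_⟩
  · have := hα (LinearMap.proj i)
    simp only [LinearMap.proj_apply] at this
    linarith
  · have := hα (-LinearMap.proj i)
    simp only [LinearMap.neg_apply, LinearMap.proj_apply] at this
    linarith

lemma El_sub (hsub : ∀ u v, φ (u - v) = φ u - φ v)
    (hcomm : ∀ u v : Module.Dual ℤ (Fin g → ℤ), u (φ v : Fin g → ℤ) = v (φ u))
    (u v : Module.Dual ℤ (Fin g → ℤ)) :
    El φ ℓ (u - v) = El φ ℓ u - 2 * ℓ * v (φ u : Fin g → ℤ) + El φ ℓ v := by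
  simp only [El, hsub, Submodule.coe_sub, map_sub, LinearMap.sub_apply, hcomm u v]
  ring

lemma sub_mem_SigmaL_of_forall_le (hsub : ∀ u v, φ (u - v) = φ u - φ v)
    (hcomm : ∀ u v : Module.Dual ℤ (Fin g → ℤ), u (φ v : Fin g → ℤ) = v (φ u))
    {x : Fin g → ℤ} {u₀ : Module.Dual ℤ (Fin g → ℤ)}
    (hmin : ∀ v, El φ ℓ u₀ - u₀ x ≤ El φ ℓ v - v x) :
    x - (2 * (ℓ : ℤ)) • (φ u₀ : Fin g → ℤ) ∈ SigmaL φ ℓ := by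
  intro u
  have h := hmin (u₀ - u)
  rw [El_sub hsub hcomm] at h
  simp only [El, map_sub, map_smul, smul_eq_mul, LinearMap.sub_apply] at h ⊢
  linarith

lemma bddBelow_range_El_sub_apply {B : Y →ₗ[ℤ] (Fin g → ℤ) →ₗ[ℤ] ℤ} {N : ℕ}
    (hYfin : Y.toAddSubgroup.index ≠ 0)
    (hBsymm : ∀ y z : Y, B y (z : Fin g → ℤ) = B z (y : Fin g → ℤ))
    (hBpos : ∀ y : Y, y ≠ 0 → 0 < B y (y : Fin g → ℤ)) (hN : 0 < N)
    (hφ : ∀ u, B (φ u) = (N : ℤ) • u) (hℓ : 0 < ℓ) (x : Fin g → ℤ) :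
    BddBelow (Set.range fun v => El φ ℓ v - v x) := by
  set m := Y.toAddSubgroup.index
  let z : Y := ⟨m • x, Y.toAddSubgroup.nsmul_index_mem x⟩
  refine ⟨-B z (z : Fin g → ℤ), ?_⟩
  rintro _ ⟨v, rfl⟩
  have hsq := two_mul_mul_apply_le hBsymm hBpos (2 * m * ℓ) (φ v) z
  have hBz : B (φ v) (z : Fin g → ℤ) = N * m * v x := by
    rw [hφ, LinearMap.smul_apply, show (z : Fin g → ℤ) = m • x from rfl, map_nsmul,
      smul_eq_mul, nsmul_eq_mul, mul_assoc]
  have hBφ : B (φ v) (φ v : Fin g → ℤ) = N * v (φ v : Fin g → ℤ) := by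
    simp only [hφ, LinearMap.smul_apply, smul_eq_mul]
  rw [hBz, hBφ] at hsq
  have hK : 1 ≤ 4 * (m : ℤ) ^ 2 * ℓ * N := by
    have : m ^ 2 * ℓ * N ≠ 0 := by positivity
    have : (1 : ℤ) ≤ m ^ 2 * ℓ * N := by exact_mod_cast Nat.one_le_iff_ne_zero.2 this
    linarith
  have hz := apply_self_nonneg hBpos z
  simp only [El]
  nlinarith

end

theorem statement4_general
    (g : ℕ)
    (Y : Submodule ℤ (Fin g → ℤ))
    (hYfin : Y.toAddSubgroup.index ≠ 0)
    (B : Y →ₗ[ℤ] (Fin g → ℤ) →ₗ[ℤ] ℤ)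
    (hBsymm : ∀ y z : Y, B y (z : Fin g → ℤ) = B z (y : Fin g → ℤ))
    (hBpos : ∀ y : Y, y ≠ 0 → 0 < B y (y : Fin g → ℤ))
    (N : ℕ) (hNpos : 0 < N)
    (φ : ((Fin g → ℤ) →ₗ[ℤ] ℤ) → Y)
    (hφ : ∀ u : (Fin g → ℤ) →ₗ[ℤ] ℤ, B (φ u) = (N : ℤ) • u)
    (ℓ : ℕ) (hℓ : 0 < ℓ) :
    (SigmaL φ ℓ).Finite ∧
    (∀ x : Fin g → ℤ, ∃ γ ∈ SigmaL φ ℓ, ∃ u : (Fin g → ℤ) →ₗ[ℤ] ℤ,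
      x = γ + (2 * (ℓ : ℤ)) • ((φ u : Fin g → ℤ))) := by
  have hsub := map_sub_of_apply_eq_smul (injective_of_apply_self_pos hBpos) hφ
  have hcomm := apply_comm_of_apply_eq_smul hBsymm hNpos hφ
  refine ⟨finite_SigmaL, fun x => ?_⟩
  obtain ⟨u₀, hu₀⟩ := exists_forall_le_of_bddBelow_range
    (bddBelow_range_El_sub_apply hYfin hBsymm hBpos hNpos hφ hℓ x)
  exact ⟨_, sub_mem_SigmaL_of_forall_le hsub hcomm hu₀, u₀, (sub_add_cancel _ _).symm⟩

/-- `Σ_ℓ` is finite and `Σ_ℓ + 2ℓφ(X^∨) = X`. -/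
theorem statement4
    (g : ℕ) (hg : 1 ≤ g)
    (Y : Submodule ℤ (Fin g → ℤ))
    (hYfin : Y.toAddSubgroup.index ≠ 0)
    (B : Y →ₗ[ℤ] (Fin g → ℤ) →ₗ[ℤ] ℤ)
    (hBsymm : ∀ y z : Y, B y (z : Fin g → ℤ) = B z (y : Fin g → ℤ))
    (hBpos : ∀ y : Y, y ≠ 0 → 0 < B y (y : Fin g → ℤ))
    (N : ℕ) (hN : N = (LinearMap.range B).toAddSubgroup.index) (hNpos : 0 < N)
    (φ : ((Fin g → ℤ) →ₗ[ℤ] ℤ) → Y)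
    (hφ : ∀ u : (Fin g → ℤ) →ₗ[ℤ] ℤ, B (φ u) = (N : ℤ) • u)
    (Bb : (Fin g → ℝ) →ₗ[ℝ] (Fin g → ℝ) →ₗ[ℝ] ℝ)
    (hBbsymm : ∀ x y : Fin g → ℝ, Bb x y = Bb y x)
    (hBbpos : ∀ x : Fin g → ℝ, x ≠ 0 → 0 < Bb x x)
    (hBbcompat : ∀ (y : Y) (x : Fin g → ℤ), Bb (iota (y : Fin g → ℤ)) (iota x) = (B y x : ℝ))
    (ℓ : ℕ) (hℓ : 0 < ℓ) :
    (SigmaL φ ℓ).Finite ∧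
    (∀ x : Fin g → ℤ, ∃ γ ∈ SigmaL φ ℓ, ∃ u : (Fin g → ℤ) →ₗ[ℤ] ℤ,
      x = γ + (2 * (ℓ : ℤ)) • ((φ u : Fin g → ℤ))) :=
  statement4_general g Y hYfin B hBsymm hBpos N hNpos φ hφ ℓ hℓ

end NFC
end

section
/- If γ, γ′ ∈ Σ_ℓ and z, z′ ∈ X^∨ satisfy γ + 2ℓφ(z) = γ′ + 2ℓφ(z′), then E_ℓ(z) + z(γ) = E_ℓ(z′) + z′(γ′); consequently D_ℓ(x) := E_ℓ(z) + z(γ), for any decomposition x = γ + 2ℓφ(z) with γ ∈ Σ_ℓ and z ∈ X^∨, is a well-defined function on X. -/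
open scoped BigOperators Pointwise

namespace NFC

/- Writing `w = z' - z`, the hypothesis says `γ = γ' + 2ℓφ(w)`, and expanding the quadratic form
`u ↦ u(φ u)` (symmetric because `B` is) gives
`E_ℓ(z') + z'(γ') - (E_ℓ(z) + z(γ)) = E_ℓ(w) + w(γ')`, which is `≥ 0` as `γ' ∈ Σ_ℓ`.
Exchanging the two decompositions gives the reverse inequality. -/

theorem injective_of_apply_self_pos_s7 {R M : Type*} [CommRing R] [PartialOrder R]
    [AddCommGroup M] [Module R M] {Y : Submodule R M} (B : Y →ₗ[R] M →ₗ[R] R)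
    (hB : ∀ y : Y, y ≠ 0 → 0 < B y (y : M)) : Function.Injective B := by
  refine (injective_iff_map_eq_zero B).mpr fun y hy => ?_
  by_contra hne
  simpa [hy] using hB y hne

theorem map_sub_of_comp_eq_smul {R V W : Type*} [Ring R] [AddCommGroup V] [Module R V]
    [AddCommGroup W] [Module R W] {B : W →ₗ[R] V} (hB : Function.Injective B) {φ : V → W}
    {c : R} (hφ : ∀ u, B (φ u) = c • u) (u v : V) : φ (u - v) = φ u - φ v :=
  hB (by rw [map_sub, hφ, hφ, hφ, smul_sub])

theorem apply_comm_of_comp_eq_smul {R M : Type*} [CommRing R] [IsDomain R]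
    [AddCommGroup M] [Module R M] {Y : Submodule R M} {B : Y →ₗ[R] M →ₗ[R] R}
    (hB : ∀ y z : Y, B y (z : M) = B z (y : M)) {φ : (M →ₗ[R] R) → Y} {c : R} (hc : c ≠ 0)
    (hφ : ∀ u, B (φ u) = c • u) (u v : M →ₗ[R] R) : u (φ v) = v (φ u) := by
  apply mul_left_cancel₀ hc
  simpa [hφ] using hB (φ u) (φ v)

theorem El_add_apply_le_of_add_eq {g : ℕ} {Y : Submodule ℤ (Fin g → ℤ)}
    {φ : ((Fin g → ℤ) →ₗ[ℤ] ℤ) → Y} (hφsub : ∀ u v, φ (u - v) = φ u - φ v)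
    (hφcomm : ∀ u v : (Fin g → ℤ) →ₗ[ℤ] ℤ, u (φ v) = v (φ u)) {ℓ : ℕ}
    {γ γ' : Fin g → ℤ} (hγ' : γ' ∈ SigmaL φ ℓ) {z z' : (Fin g → ℤ) →ₗ[ℤ] ℤ}
    (h : γ + (2 * (ℓ : ℤ)) • (φ z : Fin g → ℤ) = γ' + (2 * (ℓ : ℤ)) • (φ z' : Fin g → ℤ)) :
    El φ ℓ z + z γ ≤ El φ ℓ z' + z' γ' := by
  set w := z' - z
  have hz' : z' = z + w := by simp [w]
  have hφz' : (φ z' : Fin g → ℤ) = φ z + φ w := by simp [w, hφsub]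
  have hzγ : z γ = z γ' + 2 * ℓ * z (φ w) := by
    have := congrArg z h
    simp only [map_add, map_smul, smul_eq_mul, hφz'] at this
    linarith
  have hw := hγ' w
  simp only [El] at hw ⊢
  rw [hzγ, hφz', hz']
  simp only [LinearMap.add_apply, map_add]
  rw [hφcomm z w]
  linarith

theorem El_add_apply_eq_of_add_eq {g : ℕ} {Y : Submodule ℤ (Fin g → ℤ)}
    {φ : ((Fin g → ℤ) →ₗ[ℤ] ℤ) → Y} (hφsub : ∀ u v, φ (u - v) = φ u - φ v)
    (hφcomm : ∀ u v : (Fin g → ℤ) →ₗ[ℤ] ℤ, u (φ v) = v (φ u)) {ℓ : ℕ}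
    {γ γ' : Fin g → ℤ} (hγ : γ ∈ SigmaL φ ℓ) (hγ' : γ' ∈ SigmaL φ ℓ)
    {z z' : (Fin g → ℤ) →ₗ[ℤ] ℤ}
    (h : γ + (2 * (ℓ : ℤ)) • (φ z : Fin g → ℤ) = γ' + (2 * (ℓ : ℤ)) • (φ z' : Fin g → ℤ)) :
    El φ ℓ z + z γ = El φ ℓ z' + z' γ' :=
  le_antisymm (El_add_apply_le_of_add_eq hφsub hφcomm hγ' h)
    (El_add_apply_le_of_add_eq hφsub hφcomm hγ h.symm)

theorem statement7_general
    (g : ℕ)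
    (Y : Submodule ℤ (Fin g → ℤ))
    (B : Y →ₗ[ℤ] (Fin g → ℤ) →ₗ[ℤ] ℤ)
    (hBsymm : ∀ y z : Y, B y (z : Fin g → ℤ) = B z (y : Fin g → ℤ))
    (hBpos : ∀ y : Y, y ≠ 0 → 0 < B y (y : Fin g → ℤ))
    (N : ℕ) (hNpos : 0 < N)
    (φ : ((Fin g → ℤ) →ₗ[ℤ] ℤ) → Y)
    (hφ : ∀ u : (Fin g → ℤ) →ₗ[ℤ] ℤ, B (φ u) = (N : ℤ) • u)
    (ℓ : ℕ) :
    (∀ γ ∈ SigmaL φ ℓ, ∀ γ' ∈ SigmaL φ ℓ, ∀ z z' : (Fin g → ℤ) →ₗ[ℤ] ℤ,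
      γ + (2 * (ℓ : ℤ)) • ((φ z : Fin g → ℤ)) = γ' + (2 * (ℓ : ℤ)) • ((φ z' : Fin g → ℤ)) →
      El φ ℓ z + z γ = El φ ℓ z' + z' γ') ∧
    (∃ D : (Fin g → ℤ) → ℤ, ∀ γ ∈ SigmaL φ ℓ, ∀ z : (Fin g → ℤ) →ₗ[ℤ] ℤ,
      D (γ + (2 * (ℓ : ℤ)) • ((φ z : Fin g → ℤ))) = El φ ℓ z + z γ) := by
  have hφsub := map_sub_of_comp_eq_smul (injective_of_apply_self_pos_s7 B hBpos) hφ
  have hφcomm := apply_comm_of_comp_eq_smul hBsymm (by exact_mod_cast hNpos.ne') hφ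
  refine ⟨fun γ hγ γ' hγ' z z' => El_add_apply_eq_of_add_eq hφsub hφcomm hγ hγ', ?_⟩
  let decomp : SigmaL φ ℓ × ((Fin g → ℤ) →ₗ[ℤ] ℤ) → Fin g → ℤ :=
    fun p => p.1 + (2 * (ℓ : ℤ)) • (φ p.2 : Fin g → ℤ)
  let value : SigmaL φ ℓ × ((Fin g → ℤ) →ₗ[ℤ] ℤ) → ℤ := fun p => El φ ℓ p.2 + p.2 p.1
  have hfactor : Function.FactorsThrough value decomp :=
    fun p q => El_add_apply_eq_of_add_eq hφsub hφcomm p.1.2 q.1.2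
  exact ⟨Function.extend decomp value 0, fun γ hγ z => hfactor.extend_apply 0 (⟨γ, hγ⟩, z)⟩

/-- the quantity `E_ℓ(z) + z(γ)` depends only on `γ + 2ℓφ(z)`, so
`D_ℓ` is a well-defined function on `X`. -/
theorem statement7
    (g : ℕ) (hg : 1 ≤ g)
    (Y : Submodule ℤ (Fin g → ℤ))
    (hYfin : Y.toAddSubgroup.index ≠ 0)
    (B : Y →ₗ[ℤ] (Fin g → ℤ) →ₗ[ℤ] ℤ)
    (hBsymm : ∀ y z : Y, B y (z : Fin g → ℤ) = B z (y : Fin g → ℤ))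
    (hBpos : ∀ y : Y, y ≠ 0 → 0 < B y (y : Fin g → ℤ))
    (N : ℕ) (hN : N = (LinearMap.range B).toAddSubgroup.index) (hNpos : 0 < N)
    (φ : ((Fin g → ℤ) →ₗ[ℤ] ℤ) → Y)
    (hφ : ∀ u : (Fin g → ℤ) →ₗ[ℤ] ℤ, B (φ u) = (N : ℤ) • u)
    (ℓ : ℕ) (hℓ : 0 < ℓ) :
    (∀ γ ∈ SigmaL φ ℓ, ∀ γ' ∈ SigmaL φ ℓ, ∀ z z' : (Fin g → ℤ) →ₗ[ℤ] ℤ,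
      γ + (2 * (ℓ : ℤ)) • ((φ z : Fin g → ℤ)) = γ' + (2 * (ℓ : ℤ)) • ((φ z' : Fin g → ℤ)) →
      El φ ℓ z + z γ = El φ ℓ z' + z' γ') ∧
    (∃ D : (Fin g → ℤ) → ℤ, ∀ γ ∈ SigmaL φ ℓ, ∀ z : (Fin g → ℤ) →ₗ[ℤ] ℤ,
      D (γ + (2 * (ℓ : ℤ)) • ((φ z : Fin g → ℤ))) = El φ ℓ z + z γ) :=
  statement7_general g Y B hBsymm hBpos N hNpos φ hφ ℓ

end NFC
end

section
/- Assume Σ_ℓ(0) is integral and let α ∈ Σ_ℓ. Then the submonoid of ℤ × X generated by (1, 0) together with the set {(D_ℓ(x), x − α) : x ∈ X} is a finitely generated additive monoid. (This monoid is the weight monoid of the R-algebra A_{ℓ,α,0} = R[s^{D_ℓ(x)}·w^{x−α} : x ∈ X] over a discrete valuation ring R with uniformizer s, so A_{ℓ,α,0} is finitely generated over R.) -/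
open scoped BigOperators Pointwise

namespace NFC

/-!
Write `q(x) = B̄(x, x)`. A point `γ` of `x + 2ℓφ(X^∨)` nearest to the origin lies in `Σ_ℓ`, and
expanding `q(γ + 2ℓφ(z))` gives `4ℓN · D_ℓ(x) = q(x) - q(γ)`. As `2ℓφ(X^∨)` contains a full-rank
sublattice `K • X`, the nearest point `γ` is bounded, so `4ℓN · D_ℓ` is the positive definite
form `q` up to a bounded error. For such a function, splitting `x - α = s + w` into two halves
gives `D_ℓ(α + s) + D_ℓ(α + w) ≤ D_ℓ(x)` and `q(s), q(w) < q(x - α)` once `q(x - α)` is large.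
Descending along `q`, the surplus being a multiple of `(1, 0)`, the finitely many generators with
`q(x - α)` bounded, together with `(1, 0)`, suffice.
-/

theorem wellFounded_lt_on_of_finite_setOf_le {ι : Type*} (q : ι → ℝ)
    (hq : ∀ r, {x | q x ≤ r}.Finite) : WellFounded (InvImage (· < ·) q) :=
  Subrelation.wf
    (fun {a b} (hab : q a < q b) =>
      Set.ncard_lt_ncard (s := {x | q x < q a}) (t := {x | q x < q b})
        ⟨fun _ hx => hx.trans hab, fun h => lt_irrefl (q a) (h hab)⟩
        ((hq (q b)).subset fun _ hx => le_of_lt (α := ℝ) hx))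
    (measure fun a => {x | q x < q a}.ncard).wf

theorem apply_self_nonneg_of_pos {E : Type*} [AddCommGroup E] [Module ℝ E]
    {Bb : E →ₗ[ℝ] E →ₗ[ℝ] ℝ} (hpos : ∀ v, v ≠ 0 → 0 < Bb v v) (v : E) : 0 ≤ Bb v v := by
  rcases eq_or_ne v 0 with rfl | hv
  · simp
  · exact (hpos v hv).le

theorem continuous_apply_self {E : Type*} [NormedAddCommGroup E] [NormedSpace ℝ E]
    [FiniteDimensional ℝ E] (Bb : E →ₗ[ℝ] E →ₗ[ℝ] ℝ) : Continuous fun v => Bb v v :=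
  (LinearMap.toContinuousLinearMap
    ((LinearMap.toContinuousLinearMap : (E →ₗ[ℝ] ℝ) ≃ₗ[ℝ] E →L[ℝ] ℝ).toLinearMap ∘ₗ Bb)
    ).continuous.clm_apply continuous_id

theorem exists_pos_mul_norm_sq_le {E : Type*} [NormedAddCommGroup E] [NormedSpace ℝ E]
    [FiniteDimensional ℝ E] (Bb : E →ₗ[ℝ] E →ₗ[ℝ] ℝ) (hpos : ∀ v, v ≠ 0 → 0 < Bb v v) :
    ∃ c, 0 < c ∧ ∀ v, c * ‖v‖ ^ 2 ≤ Bb v v := by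
  rcases subsingleton_or_nontrivial E with hE | hE
  · exact ⟨1, one_pos, fun v => by simp [Subsingleton.elim v 0]⟩
  obtain ⟨u, hu, hmin⟩ := (isCompact_sphere (0 : E) 1).exists_isMinOn
    (NormedSpace.sphere_nonempty.2 zero_le_one) (continuous_apply_self Bb).continuousOn
  have hu1 : ‖u‖ = 1 := mem_sphere_zero_iff_norm.1 hu
  refine ⟨Bb u u, hpos u (norm_ne_zero_iff.1 (by simp [hu1])), fun v => ?_⟩
  rcases eq_or_ne v 0 with rfl | hv
  · simp
  have hv' : 0 < ‖v‖ := norm_pos_iff.2 hv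
  have hle : Bb u u ≤ Bb (‖v‖⁻¹ • v) (‖v‖⁻¹ • v) :=
    hmin (mem_sphere_zero_iff_norm.2 (by simp [norm_smul, hv'.ne']))
  have hhom : Bb (‖v‖⁻¹ • v) (‖v‖⁻¹ • v) = Bb v v / ‖v‖ ^ 2 := by
    simp only [map_smul, LinearMap.smul_apply, smul_eq_mul]
    field_simp
  rw [hhom, le_div_iff₀ (by positivity)] at hle
  exact hle

lemma iota_add {g : ℕ} (x y : Fin g → ℤ) : iota (x + y) = iota x + iota y := by
  funext i; simp [iota]

lemma iota_sub {g : ℕ} (x y : Fin g → ℤ) : iota (x - y) = iota x - iota y := by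
  funext i; simp [iota]

lemma iota_smul {g : ℕ} (n : ℤ) (x : Fin g → ℤ) : iota (n • x) = (n : ℝ) • iota x := by
  funext i; simp [iota]

lemma norm_iota {g : ℕ} (x : Fin g → ℤ) : ‖iota x‖ = ‖x‖ := by
  have h : ∀ i, ‖(x i : ℝ)‖₊ = ‖x i‖₊ := fun i => NNReal.eq (Int.norm_cast_real _)
  simp [iota, Pi.norm_def, h]

theorem finite_setOf_apply_iota_le {g : ℕ} (Bb : (Fin g → ℝ) →ₗ[ℝ] (Fin g → ℝ) →ₗ[ℝ] ℝ)
    (hpos : ∀ v, v ≠ 0 → 0 < Bb v v) (r : ℝ) :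
    {x : Fin g → ℤ | Bb (iota x) (iota x) ≤ r}.Finite := by
  obtain ⟨c, hc, hcoer⟩ := exists_pos_mul_norm_sq_le Bb hpos
  refine (isCompact_closedBall (0 : Fin g → ℤ) √(r / c)).finite_of_discrete.subset fun x hx => ?_
  have hr : c * ‖iota x‖ ^ 2 ≤ r := (hcoer (iota x)).trans hx
  have hrc : 0 ≤ r / c := div_nonneg (le_trans (by positivity) hr) hc.le
  rw [mem_closedBall_zero_iff, Real.le_sqrt (norm_nonneg _) hrc, le_div_iff₀ hc, ← norm_iota]
  linarith

theorem exists_sub_smul_mem_Icc {g : ℕ} {K : ℤ} (hK : 0 < K) (v : Fin g → ℤ) :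
    ∃ s, v - K • s ∈ Set.Icc 0 (fun _ => K - 1) :=
  ⟨fun i => v i / K, fun i => by simp [← Int.emod_def, Int.emod_nonneg _ hK.ne'],
    fun i => by simp [← Int.emod_def]; linarith [Int.emod_lt_of_pos (v i) hK]⟩

section Descent

variable {g : ℕ} (Bb : (Fin g → ℝ) →ₗ[ℝ] (Fin g → ℝ) →ₗ[ℝ] ℝ)

/-- Split `v = s + w` with `w - s ∈ {0,1}^g`: then `q(α+v) - q(α+s) - q(α+w)`, which equals
`(q(v) - q(w-s))/2 - q(α)`, outgrows the error `C` once `q(v)` is large. -/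
theorem exists_split_of_lt (hpos : ∀ v, v ≠ 0 → 0 < Bb v v) (f : (Fin g → ℤ) → ℤ) {c C : ℝ}
    (hc : 0 < c)
    (hf : ∀ x, Bb (iota x) (iota x) - C ≤ c * f x ∧ c * f x ≤ Bb (iota x) (iota x))
    (α : Fin g → ℤ) :
    ∃ T, ∀ v, T < Bb (iota v) (iota v) → ∃ s w, s + w = v ∧
      Bb (iota s) (iota s) < Bb (iota v) (iota v) ∧ Bb (iota w) (iota w) < Bb (iota v) (iota v) ∧
      f (α + s) + f (α + w) ≤ f (α + v) := by
  obtain ⟨Cd, hCd⟩ := ((Set.finite_Icc (0 : Fin g → ℤ) (fun _ => 2 - 1)).image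
    fun d => Bb (iota d) (iota d)).bddAbove
  have hC : 0 ≤ C := by linarith [hf 0]
  have hnonneg := apply_self_nonneg_of_pos hpos
  refine ⟨Cd + 2 * Bb (iota α) (iota α) + 2 * C, fun v hT => ?_⟩
  obtain ⟨s, hs⟩ := exists_sub_smul_mem_Icc two_pos v
  refine ⟨s, v - s, add_sub_cancel s v, ?_⟩
  have hd := hCd (Set.mem_image_of_mem _ hs)
  set S := iota s
  set W := iota (v - s)
  set A := iota α
  have hv : iota v = S + W := by rw [← iota_add, add_sub_cancel]
  have hd' : iota (v - (2 : ℤ) • s) = W - S := by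
    rw [show v - (2 : ℤ) • s = (v - s) - s by module, iota_sub]
  have hαs : iota (α + s) = A + S := iota_add _ _
  have hαw : iota (α + (v - s)) = A + W := iota_add _ _
  have hαv : iota (α + v) = A + S + W := by rw [iota_add, hv, add_assoc]
  have e1 : Bb (S + W) (S + W) = Bb S S + Bb W W + (Bb S W + Bb W S) := by
    simp only [map_add, LinearMap.add_apply]; ring
  have e2 : Bb (W - S) (W - S) = Bb S S + Bb W W - (Bb S W + Bb W S) := by
    simp only [map_sub, LinearMap.sub_apply]; ring
  have e3 : Bb (A + S + W) (A + S + W)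
      = Bb (A + S) (A + S) + Bb (A + W) (A + W) - Bb A A + (Bb S W + Bb W S) := by
    simp only [map_add, LinearMap.add_apply]; ring
  rw [hd'] at hd
  rw [hv] at hT ⊢
  have hS := hnonneg S
  have hW := hnonneg W
  have hA := hnonneg A
  refine ⟨by linarith, by linarith, ?_⟩
  have hsv := (hf (α + v)).1
  have hss := (hf (α + s)).2
  have hsw := (hf (α + (v - s))).2
  rw [hαv] at hsv
  rw [hαs] at hss
  rw [hαw] at hsw
  have : c * ((f (α + s) + f (α + (v - s)) : ℤ) : ℝ) ≤ c * (f (α + v) : ℝ) := by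
    push_cast; linarith
  exact_mod_cast le_of_mul_le_mul_left this hc

theorem addSubmonoid_closure_fg_of_sub_le_mul_le (hpos : ∀ v, v ≠ 0 → 0 < Bb v v)
    (f : (Fin g → ℤ) → ℤ) {c C : ℝ} (hc : 0 < c)
    (hf : ∀ x, Bb (iota x) (iota x) - C ≤ c * f x ∧ c * f x ≤ Bb (iota x) (iota x))
    (α : Fin g → ℤ) :
    (AddSubmonoid.closure
      (insert ((1 : ℤ), (0 : Fin g → ℤ)) {p | ∃ x, p = (f x, x - α)})).FG := by
  obtain ⟨T, hT⟩ := exists_split_of_lt Bb hpos f hc hf α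
  set G := insert ((1 : ℤ), (0 : Fin g → ℤ))
    ((fun v => (f (α + v), v)) '' {v | Bb (iota v) (iota v) ≤ T})
  have hone : ((1 : ℤ), (0 : Fin g → ℤ)) ∈ AddSubmonoid.closure G :=
    AddSubmonoid.subset_closure (Set.mem_insert _ _)
  have hmem (v : Fin g → ℤ) : (f (α + v), v) ∈ AddSubmonoid.closure G := by
    induction v using
      (wellFounded_lt_on_of_finite_setOf_le _ (finite_setOf_apply_iota_le Bb hpos)).induction
      with | _ v ih => ?_
    by_cases hv : Bb (iota v) (iota v) ≤ T
    · exact AddSubmonoid.subset_closure (Set.mem_insert_of_mem _ ⟨v, hv, rfl⟩)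
    obtain ⟨s, w, rfl, hs, hw, hle⟩ := hT v (not_le.1 hv)
    have hsplit : (f (α + (s + w)), s + w) = (f (α + s), s) + (f (α + w), w)
        + (f (α + (s + w)) - f (α + s) - f (α + w)).toNat • ((1 : ℤ), (0 : Fin g → ℤ)) := by
      ext
      · simp [Int.toNat_of_nonneg (sub_nonneg.2 (le_sub_left_of_add_le hle))]
      · simp
    rw [hsplit]
    exact add_mem (add_mem (ih s hs) (ih w hw)) (nsmul_mem hone _)
  refine (AddSubmonoid.fg_iff _).2
    ⟨G, le_antisymm ?_ ?_, ((finite_setOf_apply_iota_le Bb hpos T).image _).insert _⟩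
  · refine AddSubmonoid.closure_le.2 ?_
    rintro _ (rfl | ⟨v, -, rfl⟩)
    · exact AddSubmonoid.subset_closure (Set.mem_insert _ _)
    · exact AddSubmonoid.subset_closure (Set.mem_insert_of_mem _ ⟨α + v, by simp⟩)
  · refine AddSubmonoid.closure_le.2 ?_
    rintro _ (rfl | ⟨x, rfl⟩)
    · exact hone
    · simpa using hmem (x - α)

end Descent

section Voronoi

variable {g : ℕ} {Y : Submodule ℤ (Fin g → ℤ)} {B : Y →ₗ[ℤ] (Fin g → ℤ) →ₗ[ℤ] ℤ} {N : ℕ}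
  {φ : ((Fin g → ℤ) →ₗ[ℤ] ℤ) → Y} {Bb : (Fin g → ℝ) →ₗ[ℝ] (Fin g → ℝ) →ₗ[ℝ] ℝ} {ℓ : ℕ}

theorem phi_sub (hB : Function.Injective B) (hφ : ∀ u, B (φ u) = (N : ℤ) • u)
    (u v : (Fin g → ℤ) →ₗ[ℤ] ℤ) : φ (u - v) = φ u - φ v :=
  hB (by rw [map_sub, hφ, hφ, hφ, smul_sub])

theorem phi_apply_B (hB : Function.Injective B) (hφ : ∀ u, B (φ u) = (N : ℤ) • u) (y : Y) :
    φ (B y) = (N : ℤ) • y :=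
  hB (by rw [hφ, map_smul])

theorem phi_injective (hN : 0 < N) (hφ : ∀ u, B (φ u) = (N : ℤ) • u) : Function.Injective φ :=
  fun u v huv => smul_right_injective _ (by positivity : (N : ℤ) ≠ 0)
    (show (N : ℤ) • u = (N : ℤ) • v by rw [← hφ, ← hφ, huv])

theorem apply_self_add_two_ell_smul_phi (hφ : ∀ u, B (φ u) = (N : ℤ) • u)
    (hBbsymm : ∀ x y, Bb x y = Bb y x)
    (hBbcompat : ∀ (y : Y) (x : Fin g → ℤ), Bb (iota (y : Fin g → ℤ)) (iota x) = (B y x : ℝ))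
    (γ : Fin g → ℤ) (z : (Fin g → ℤ) →ₗ[ℤ] ℤ) :
    Bb (iota (γ + (2 * (ℓ : ℤ)) • (φ z : Fin g → ℤ)))
        (iota (γ + (2 * (ℓ : ℤ)) • (φ z : Fin g → ℤ)))
      = Bb (iota γ) (iota γ) + 4 * ℓ * N * ((El φ ℓ z + z γ : ℤ) : ℝ) := by
  have hcross (x : Fin g → ℤ) : Bb (iota x) (iota (φ z : Fin g → ℤ)) = N * z x := by
    rw [hBbsymm, hBbcompat, hφ]; simp
  rw [iota_add, iota_smul]
  simp only [map_add, map_smul, LinearMap.add_apply, LinearMap.smul_apply, smul_eq_mul]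
  rw [hBbsymm (iota (φ z : Fin g → ℤ)) (iota γ), hcross, hcross, El]
  push_cast
  ring

theorem mem_sigmaL_of_forall_le (hℓ : 0 < ℓ) (hN : 0 < N) (hφ : ∀ u, B (φ u) = (N : ℤ) • u)
    (hBbsymm : ∀ x y, Bb x y = Bb y x)
    (hBbcompat : ∀ (y : Y) (x : Fin g → ℤ), Bb (iota (y : Fin g → ℤ)) (iota x) = (B y x : ℝ))
    {γ : Fin g → ℤ}
    (h : ∀ u, Bb (iota γ) (iota γ) ≤ Bb (iota (γ + (2 * (ℓ : ℤ)) • (φ u : Fin g → ℤ)))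
      (iota (γ + (2 * (ℓ : ℤ)) • (φ u : Fin g → ℤ)))) :
    γ ∈ SigmaL φ ℓ := fun u => by
  have hu := h u
  rw [apply_self_add_two_ell_smul_phi hφ hBbsymm hBbcompat] at hu
  have : (0 : ℝ) ≤ 4 * ℓ * N * ((El φ ℓ u + u γ : ℤ) : ℝ) := by linarith
  exact_mod_cast (mul_nonneg_iff_of_pos_left (by positivity)).1 this

theorem exists_sub_mem_sigmaL_forall_le (hℓ : 0 < ℓ) (hN : 0 < N) (hB : Function.Injective B)
    (hφ : ∀ u, B (φ u) = (N : ℤ) • u) (hBbsymm : ∀ x y, Bb x y = Bb y x)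
    (hBbpos : ∀ x, x ≠ 0 → 0 < Bb x x)
    (hBbcompat : ∀ (y : Y) (x : Fin g → ℤ), Bb (iota (y : Fin g → ℤ)) (iota x) = (B y x : ℝ))
    (x : Fin g → ℤ) :
    ∃ z, x - (2 * (ℓ : ℤ)) • (φ z : Fin g → ℤ) ∈ SigmaL φ ℓ ∧
      ∀ u, Bb (iota (x - (2 * (ℓ : ℤ)) • (φ z : Fin g → ℤ)))
          (iota (x - (2 * (ℓ : ℤ)) • (φ z : Fin g → ℤ)))
        ≤ Bb (iota (x - (2 * (ℓ : ℤ)) • (φ u : Fin g → ℤ)))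
          (iota (x - (2 * (ℓ : ℤ)) • (φ u : Fin g → ℤ))) := by
  set F := fun u => Bb (iota (x - (2 * (ℓ : ℤ)) • (φ u : Fin g → ℤ)))
    (iota (x - (2 * (ℓ : ℤ)) • (φ u : Fin g → ℤ)))
  have hinj : Function.Injective fun u => x - (2 * (ℓ : ℤ)) • (φ u : Fin g → ℤ) :=
    (sub_right_injective.comp (smul_right_injective _ (by positivity))).comp
      (Subtype.val_injective.comp (phi_injective hN hφ))
  obtain ⟨z, -, hz⟩ := (wellFounded_lt_on_of_finite_setOf_le F
    fun r => (finite_setOf_apply_iota_le Bb hBbpos r).preimage hinj.injOn).has_min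
    Set.univ ⟨0, trivial⟩
  have hmin (u) : F z ≤ F u := not_lt.1 (hz u trivial)
  refine ⟨z, mem_sigmaL_of_forall_le hℓ hN hφ hBbsymm hBbcompat fun u => ?_, hmin⟩
  have hzu : x - (2 * (ℓ : ℤ)) • (φ (z - u) : Fin g → ℤ)
      = x - (2 * (ℓ : ℤ)) • (φ z : Fin g → ℤ) + (2 * (ℓ : ℤ)) • (φ u : Fin g → ℤ) := by
    rw [phi_sub hB hφ, Submodule.coe_sub]; module
  simpa only [F, hzu] using hmin (z - u)

-- `2ℓφ(X^∨) ⊇ K • X` for `K = 2ℓN[X : Y]`, since `φ(β(y)) = N y` and `[X : Y] • X ⊆ Y`.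
theorem exists_sub_mem_Icc (hYfin : Y.toAddSubgroup.index ≠ 0) (hℓ : 0 < ℓ) (hN : 0 < N)
    (hB : Function.Injective B) (hφ : ∀ u, B (φ u) = (N : ℤ) • u) (x : Fin g → ℤ) :
    ∃ u, x - (2 * (ℓ : ℤ)) • (φ u : Fin g → ℤ) ∈
      Set.Icc 0 (fun _ => 2 * ℓ * N * (Y.toAddSubgroup.index : ℤ) - 1) := by
  have hY := Nat.pos_of_ne_zero hYfin
  obtain ⟨s, hs⟩ :=
    exists_sub_smul_mem_Icc (K := 2 * ℓ * N * (Y.toAddSubgroup.index : ℤ)) (by positivity) x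
  refine ⟨B ⟨Y.toAddSubgroup.index • s, Y.toAddSubgroup.nsmul_index_mem s⟩, ?_⟩
  convert hs using 2
  rw [phi_apply_B hB hφ, Submodule.coe_smul, Submodule.coe_mk, smul_smul, ← natCast_zsmul,
    smul_smul]

theorem exists_forall_sub_le_mul_le (hYfin : Y.toAddSubgroup.index ≠ 0) (hℓ : 0 < ℓ)
    (hN : 0 < N) (hB : Function.Injective B) (hφ : ∀ u, B (φ u) = (N : ℤ) • u)
    (hBbsymm : ∀ x y, Bb x y = Bb y x) (hBbpos : ∀ x, x ≠ 0 → 0 < Bb x x)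
    (hBbcompat : ∀ (y : Y) (x : Fin g → ℤ), Bb (iota (y : Fin g → ℤ)) (iota x) = (B y x : ℝ))
    {D : (Fin g → ℤ) → ℤ}
    (hD : ∀ γ ∈ SigmaL φ ℓ, ∀ z : (Fin g → ℤ) →ₗ[ℤ] ℤ,
      D (γ + (2 * (ℓ : ℤ)) • ((φ z : Fin g → ℤ))) = El φ ℓ z + z γ) :
    ∃ C, ∀ x, Bb (iota x) (iota x) - C ≤ 4 * ℓ * N * (D x : ℝ) ∧
      4 * ℓ * N * (D x : ℝ) ≤ Bb (iota x) (iota x) := by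
  obtain ⟨C, hC⟩ := ((Set.finite_Icc (0 : Fin g → ℤ)
    (fun _ => 2 * ℓ * N * (Y.toAddSubgroup.index : ℤ) - 1)).image
    fun r => Bb (iota r) (iota r)).bddAbove
  refine ⟨C, fun x => ?_⟩
  obtain ⟨z, hγ, hmin⟩ :=
    exists_sub_mem_sigmaL_forall_le hℓ hN hB hφ hBbsymm hBbpos hBbcompat x
  obtain ⟨u, hu⟩ := exists_sub_mem_Icc hYfin hℓ hN hB hφ x
  have hDx := hD _ hγ z
  have hx := apply_self_add_two_ell_smul_phi (ℓ := ℓ) hφ hBbsymm hBbcompat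
    (x - (2 * (ℓ : ℤ)) • (φ z : Fin g → ℤ)) z
  rw [sub_add_cancel] at hDx hx
  rw [← hDx] at hx
  have hbox := hC (Set.mem_image_of_mem _ hu)
  have hγ0 := apply_self_nonneg_of_pos hBbpos (iota (x - (2 * (ℓ : ℤ)) • (φ z : Fin g → ℤ)))
  constructor <;> linarith [hmin u]

end Voronoi

theorem statement9_general
    (g : ℕ)
    (Y : Submodule ℤ (Fin g → ℤ))
    (hYfin : Y.toAddSubgroup.index ≠ 0)
    (B : Y →ₗ[ℤ] (Fin g → ℤ) →ₗ[ℤ] ℤ)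
    (hBpos : ∀ y : Y, y ≠ 0 → 0 < B y (y : Fin g → ℤ))
    (N : ℕ) (hNpos : 0 < N)
    (φ : ((Fin g → ℤ) →ₗ[ℤ] ℤ) → Y)
    (hφ : ∀ u : (Fin g → ℤ) →ₗ[ℤ] ℤ, B (φ u) = (N : ℤ) • u)
    (Bb : (Fin g → ℝ) →ₗ[ℝ] (Fin g → ℝ) →ₗ[ℝ] ℝ)
    (hBbsymm : ∀ x y : Fin g → ℝ, Bb x y = Bb y x)
    (hBbpos : ∀ x : Fin g → ℝ, x ≠ 0 → 0 < Bb x x)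
    (hBbcompat : ∀ (y : Y) (x : Fin g → ℤ), Bb (iota (y : Fin g → ℤ)) (iota x) = (B y x : ℝ))
    (ℓ : ℕ) (hℓ : 0 < ℓ)
    (D : (Fin g → ℤ) → ℤ)
    (hD : ∀ γ ∈ SigmaL φ ℓ, ∀ z : (Fin g → ℤ) →ₗ[ℤ] ℤ,
      D (γ + (2 * (ℓ : ℤ)) • ((φ z : Fin g → ℤ))) = El φ ℓ z + z γ)
    (α : Fin g → ℤ) :
    (AddSubmonoid.closure
      (insert ((1 : ℤ), (0 : Fin g → ℤ))
        {p : ℤ × (Fin g → ℤ) | ∃ x : Fin g → ℤ, p = (D x, x - α)})).FG := by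
  have hB : Function.Injective B := (injective_iff_map_eq_zero B).2 fun y hy =>
    by_contra fun hne => (hBpos y hne).ne' (by simp [hy])
  obtain ⟨C, hC⟩ :=
    exists_forall_sub_le_mul_le hYfin hℓ hNpos hB hφ hBbsymm hBbpos hBbcompat hD
  exact addSubmonoid_closure_fg_of_sub_le_mul_le Bb hBbpos D (by positivity) hC α

/-- if `Σ_ℓ(0)` is integral and `α ∈ Σ_ℓ`, the submonoid of `ℤ × X`
generated by `(1,0)` and `{(D_ℓ(x), x − α) : x ∈ X}` (the weight monoid of
`A_{ℓ,α,0}`) is finitely generated. -/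
theorem statement9
    (g : ℕ) (hg : 1 ≤ g)
    (Y : Submodule ℤ (Fin g → ℤ))
    (hYfin : Y.toAddSubgroup.index ≠ 0)
    (B : Y →ₗ[ℤ] (Fin g → ℤ) →ₗ[ℤ] ℤ)
    (hBsymm : ∀ y z : Y, B y (z : Fin g → ℤ) = B z (y : Fin g → ℤ))
    (hBpos : ∀ y : Y, y ≠ 0 → 0 < B y (y : Fin g → ℤ))
    (N : ℕ) (hN : N = (LinearMap.range B).toAddSubgroup.index) (hNpos : 0 < N)
    (φ : ((Fin g → ℤ) →ₗ[ℤ] ℤ) → Y)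
    (hφ : ∀ u : (Fin g → ℤ) →ₗ[ℤ] ℤ, B (φ u) = (N : ℤ) • u)
    (Bb : (Fin g → ℝ) →ₗ[ℝ] (Fin g → ℝ) →ₗ[ℝ] ℝ)
    (hBbsymm : ∀ x y : Fin g → ℝ, Bb x y = Bb y x)
    (hBbpos : ∀ x : Fin g → ℝ, x ≠ 0 → 0 < Bb x x)
    (hBbcompat : ∀ (y : Y) (x : Fin g → ℤ), Bb (iota (y : Fin g → ℤ)) (iota x) = (B y x : ℝ))
    (ℓ : ℕ) (hℓ : 0 < ℓ)
    (D : (Fin g → ℤ) → ℤ)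
    (hD : ∀ γ ∈ SigmaL φ ℓ, ∀ z : (Fin g → ℤ) →ₗ[ℤ] ℤ,
      D (γ + (2 * (ℓ : ℤ)) • ((φ z : Fin g → ℤ))) = El φ ℓ z + z γ)
    (hint : IsIntegral (VorP Bb φ ℓ 0))
    (α : Fin g → ℤ) (hα : α ∈ SigmaL φ ℓ) :
    (AddSubmonoid.closure
      (insert ((1 : ℤ), (0 : Fin g → ℤ))
        {p : ℤ × (Fin g → ℤ) | ∃ x : Fin g → ℤ, p = (D x, x - α)})).FG :=
  statement9_general g Y hYfin B hBpos N hNpos φ hφ Bb hBbsymm hBbpos hBbcompat ℓ hℓ D hD α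

end NFC
end

section
/- Let α, γ ∈ Σ_ℓ and v ∈ X^∨ be such that β := α − 2ℓφ(v) ∈ Σ_ℓ. Then v(γ − β) ≥ 0, with equality if and only if γ − β + α ∈ Σ_ℓ. -/
/-!
Testing the defining inequalities of `Σ_ℓ` at `-v` for `α` and at `v` for `β = α - 2ℓφ(v)` forces
`v(α) = E_ℓ(v)`, so `v(γ - β) = E_ℓ(v) + v(γ)`, which is `≥ 0` because `γ ∈ Σ_ℓ`. Since `φ` is
additive and `u(φ w) = w(φ u)`, `E_ℓ(u + v) = E_ℓ(u) + E_ℓ(v) + 2ℓ·u(φ v)`; hence the inequality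
of `γ` at `u + v` is the inequality of `γ + 2ℓφ(v) = γ - β + α` at `u`, shifted by `E_ℓ(v) + v(γ)`.
-/

open scoped BigOperators Pointwise

namespace NFC

section Polarity

variable {R M : Type*} [CommRing R] [AddCommGroup M] [Module R M] {Y : Submodule R M}
  {B : Y →ₗ[R] M →ₗ[R] R} {N : R} {φ : Module.Dual R M → Y}

theorem injective_of_pos [LinearOrder R] [IsStrictOrderedRing R]
    (hBpos : ∀ y : Y, y ≠ 0 → 0 < B y (y : M)) : Function.Injective B := by
  refine LinearMap.ker_eq_bot.mp (LinearMap.ker_eq_bot'.mpr fun y hy => ?_)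
  by_contra hy0
  simpa [hy] using hBpos y hy0

theorem phi_add (hB : Function.Injective B) (hφ : ∀ u, B (φ u) = N • u)
    (u w : Module.Dual R M) : φ (u + w) = φ u + φ w :=
  hB (by simp only [map_add, hφ, smul_add])

theorem phi_neg (hB : Function.Injective B) (hφ : ∀ u, B (φ u) = N • u)
    (u : Module.Dual R M) : φ (-u) = -φ u :=
  hB (by simp only [map_neg, hφ, smul_neg])

theorem apply_phi_comm [IsDomain R] (hBsymm : ∀ y z : Y, B y (z : M) = B z (y : M))
    (hN : N ≠ 0) (hφ : ∀ u, B (φ u) = N • u) (u w : Module.Dual R M) :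
    u (φ w : M) = w (φ u : M) := by
  have h := hBsymm (φ u) (φ w)
  simp only [hφ, LinearMap.smul_apply, smul_eq_mul] at h
  exact mul_left_cancel₀ hN h

end Polarity

section SigmaL

variable {g : ℕ} {Y : Submodule ℤ (Fin g → ℤ)} {φ : ((Fin g → ℤ) →ₗ[ℤ] ℤ) → Y} {ℓ : ℕ}

theorem El_neg (hneg : ∀ u, φ (-u) = -φ u) (u : (Fin g → ℤ) →ₗ[ℤ] ℤ) :
    El φ ℓ (-u) = El φ ℓ u := by
  simp only [El, hneg, NegMemClass.coe_neg, map_neg, LinearMap.neg_apply, neg_neg]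

theorem El_add (hadd : ∀ u w, φ (u + w) = φ u + φ w)
    (hcomm : ∀ u w : (Fin g → ℤ) →ₗ[ℤ] ℤ, u (φ w : Fin g → ℤ) = w (φ u : Fin g → ℤ))
    (u w : (Fin g → ℤ) →ₗ[ℤ] ℤ) :
    El φ ℓ (u + w) = El φ ℓ u + El φ ℓ w + 2 * ℓ * u (φ w : Fin g → ℤ) := by
  simp only [El, hadd, Submodule.coe_add, map_add, LinearMap.add_apply, hcomm w u]
  ring

theorem apply_eq_El_of_mem_SigmaL (hneg : ∀ u, φ (-u) = -φ u) {α : Fin g → ℤ}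
    (hα : α ∈ SigmaL φ ℓ) {v : (Fin g → ℤ) →ₗ[ℤ] ℤ}
    (hβ : α - (2 * (ℓ : ℤ)) • (φ v : Fin g → ℤ) ∈ SigmaL φ ℓ) : v α = El φ ℓ v := by
  have hle : v α ≤ El φ ℓ v := by
    have h := hα (-v)
    rw [El_neg hneg, LinearMap.neg_apply] at h
    linarith
  have hge : El φ ℓ v ≤ v α := by
    have h := hβ v
    simp only [map_sub, map_smul, smul_eq_mul] at h
    unfold El at h ⊢
    linarith
  exact le_antisymm hle hge

theorem add_smul_phi_mem_SigmaL_iff (hadd : ∀ u w, φ (u + w) = φ u + φ w)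
    (hneg : ∀ u, φ (-u) = -φ u)
    (hcomm : ∀ u w : (Fin g → ℤ) →ₗ[ℤ] ℤ, u (φ w : Fin g → ℤ) = w (φ u : Fin g → ℤ))
    {γ : Fin g → ℤ} (hγ : γ ∈ SigmaL φ ℓ) (v : (Fin g → ℤ) →ₗ[ℤ] ℤ) :
    γ + (2 * (ℓ : ℤ)) • (φ v : Fin g → ℤ) ∈ SigmaL φ ℓ ↔ El φ ℓ v + v γ = 0 := by
  have hγv : 0 ≤ El φ ℓ v + v γ := hγ v
  constructor
  · intro hmem
    have h := hmem (-v)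
    simp only [El_neg hneg, map_add, map_smul, LinearMap.neg_apply, smul_eq_mul] at h
    unfold El at h hγv ⊢
    linarith
  · intro hzero u
    have h := hγ (u + v)
    rw [El_add hadd hcomm, LinearMap.add_apply] at h
    simp only [map_add, map_smul, smul_eq_mul]
    linarith

end SigmaL

theorem statement13_general
    (g : ℕ)
    (Y : Submodule ℤ (Fin g → ℤ))
    (B : Y →ₗ[ℤ] (Fin g → ℤ) →ₗ[ℤ] ℤ)
    (hBsymm : ∀ y z : Y, B y (z : Fin g → ℤ) = B z (y : Fin g → ℤ))
    (hBpos : ∀ y : Y, y ≠ 0 → 0 < B y (y : Fin g → ℤ))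
    (N : ℕ) (hNpos : 0 < N)
    (φ : ((Fin g → ℤ) →ₗ[ℤ] ℤ) → Y)
    (hφ : ∀ u : (Fin g → ℤ) →ₗ[ℤ] ℤ, B (φ u) = (N : ℤ) • u)
    (ℓ : ℕ)
    (α : Fin g → ℤ) (hα : α ∈ SigmaL φ ℓ)
    (γ : Fin g → ℤ) (hγ : γ ∈ SigmaL φ ℓ)
    (v : (Fin g → ℤ) →ₗ[ℤ] ℤ)
    (hβ : α - (2 * (ℓ : ℤ)) • ((φ v : Fin g → ℤ)) ∈ SigmaL φ ℓ) :
    0 ≤ v (γ - (α - (2 * (ℓ : ℤ)) • ((φ v : Fin g → ℤ)))) ∧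
    (v (γ - (α - (2 * (ℓ : ℤ)) • ((φ v : Fin g → ℤ)))) = 0 ↔
      γ - (α - (2 * (ℓ : ℤ)) • ((φ v : Fin g → ℤ))) + α ∈ SigmaL φ ℓ) := by
  have hB := injective_of_pos hBpos
  have hneg := phi_neg hB hφ
  have hcomm := apply_phi_comm hBsymm (by exact_mod_cast hNpos.ne') hφ
  have hval : v (γ - (α - (2 * (ℓ : ℤ)) • (φ v : Fin g → ℤ))) = El φ ℓ v + v γ := by
    simp only [map_sub, map_smul, smul_eq_mul, apply_eq_El_of_mem_SigmaL hneg hα hβ]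
    unfold El
    ring
  rw [hval, sub_sub_eq_add_sub, sub_add_cancel,
    add_smul_phi_mem_SigmaL_iff (phi_add hB hφ) hneg hcomm hγ v]
  exact ⟨hγ v, Iff.rfl⟩

/-- if `α, γ ∈ Σ_ℓ`, `v ∈ X^∨` and `β := α − 2ℓφ(v) ∈ Σ_ℓ`, then
`v(γ − β) ≥ 0`, with equality iff `γ − β + α ∈ Σ_ℓ`. -/
theorem statement13
    (g : ℕ) (hg : 1 ≤ g)
    (Y : Submodule ℤ (Fin g → ℤ))
    (hYfin : Y.toAddSubgroup.index ≠ 0)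
    (B : Y →ₗ[ℤ] (Fin g → ℤ) →ₗ[ℤ] ℤ)
    (hBsymm : ∀ y z : Y, B y (z : Fin g → ℤ) = B z (y : Fin g → ℤ))
    (hBpos : ∀ y : Y, y ≠ 0 → 0 < B y (y : Fin g → ℤ))
    (N : ℕ) (hN : N = (LinearMap.range B).toAddSubgroup.index) (hNpos : 0 < N)
    (φ : ((Fin g → ℤ) →ₗ[ℤ] ℤ) → Y)
    (hφ : ∀ u : (Fin g → ℤ) →ₗ[ℤ] ℤ, B (φ u) = (N : ℤ) • u)
    (ℓ : ℕ) (hℓ : 0 < ℓ)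
    (α : Fin g → ℤ) (hα : α ∈ SigmaL φ ℓ)
    (γ : Fin g → ℤ) (hγ : γ ∈ SigmaL φ ℓ)
    (v : (Fin g → ℤ) →ₗ[ℤ] ℤ)
    (hβ : α - (2 * (ℓ : ℤ)) • ((φ v : Fin g → ℤ)) ∈ SigmaL φ ℓ) :
    0 ≤ v (γ - (α - (2 * (ℓ : ℤ)) • ((φ v : Fin g → ℤ)))) ∧
    (v (γ - (α - (2 * (ℓ : ℤ)) • ((φ v : Fin g → ℤ)))) = 0 ↔
      γ - (α - (2 * (ℓ : ℤ)) • ((φ v : Fin g → ℤ))) + α ∈ SigmaL φ ℓ) :=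
  statement13_general g Y B hBsymm hBpos N hNpos φ hφ ℓ α hα γ hγ v hβ

end NFC
end
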